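/- Let û : ℝ≥0 → ℂ⁶ solve the Fourier-transformed Model II system with m = 6 as above. Then ξ·∂ₜRe(i·û₁·conj(û₂)) + ξ²(|û₁|² − |û₂|²) + γ·ξ·Re(i·û₁·conj(û₂)) + ξ·Re(i·û₁·conj(û₃)) = 0 for all t ≥ 0. -/

import Mathlib

open Complex ComplexConjugate

theorem HasDerivAt.re_mul_conj {f g : ℝ → ℂ} {f' g' : ℂ} {t : ℝ}
    (hf : HasDerivAt f f' t) (hg : HasDerivAt g g' t) :
    HasDerivAt (fun s => (f s * conj (g s)).re) (f' * conj (g t) + f t * conj g').re t := by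
  have hg_conj : HasDerivAt (fun s => conj (g s)) (conj g') t := by
    simpa only [star_def] using hg.star
  exact reCLM.hasFDerivAt.comp_hasDerivAt t (hf.mul hg_conj)

theorem hasDerivAt_neg_of_deriv_add_eq_zero {f : ℝ → ℂ} {t : ℝ} {v : ℂ}
    (hf : DifferentiableAt ℝ f t) (h : deriv f t + v = 0) : HasDerivAt f (-v) t := by
  rw [← eq_neg_of_add_eq_zero_left h]
  exact hf.hasDerivAt

theorem stmt15_general (γ ξ : ℝ)
    (u : ℝ → Fin 6 → ℂ)
    (hdiff : ∀ j : Fin 6, ∀ t : ℝ, 0 ≤ t → DifferentiableAt ℝ (fun s => u s j) t)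
    (h1 : ∀ t : ℝ, 0 ≤ t →
      deriv (fun s => u s 0) t + I * (ξ : ℂ) * u t 1 = 0)
    (h2 : ∀ t : ℝ, 0 ≤ t →
      deriv (fun s => u s 1) t + I * (ξ : ℂ) * u t 0 + (γ : ℂ) * u t 1 + u t 2 = 0) :
    ∀ t : ℝ, 0 ≤ t →
      ξ * deriv (fun s => (I * u s 0 * (starRingEnd ℂ) (u s 1)).re) t
      + ξ^2 * (Complex.normSq (u t 0) - Complex.normSq (u t 1))
      + γ * ξ * (I * u t 0 * (starRingEnd ℂ) (u t 1)).re
      + ξ * (I * u t 0 * (starRingEnd ℂ) (u t 2)).re = 0 := by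
  intro t ht
  have hu₀ := hasDerivAt_neg_of_deriv_add_eq_zero (hdiff 0 t ht) (h1 t ht)
  have hu₁ := hasDerivAt_neg_of_deriv_add_eq_zero (hdiff 1 t ht)
    (v := I * ξ * u t 0 + γ * u t 1 + u t 2) (by rw [← h2 t ht]; ring)
  rw [((hu₀.const_mul I).re_mul_conj hu₁).deriv]
  simp only [add_re, mul_re, mul_im, neg_re, neg_im, add_im, I_re, I_im, conj_re, conj_im,
    ofReal_re, ofReal_im, normSq_apply, map_add, map_neg, map_mul]
  ring

/-- Dissipation identity (3.3) for the Fourier-transformed Model II system with m = 6. -/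
theorem stmt15 (γ ξ a₄ a₅ a₆ : ℝ) (hγ : 0 < γ)
    (ha₄ : a₄ ≠ 0) (ha₅ : a₅ ≠ 0) (ha₆ : a₆ ≠ 0)
    (u : ℝ → Fin 6 → ℂ)
    (hdiff : ∀ j : Fin 6, ∀ t : ℝ, 0 ≤ t → DifferentiableAt ℝ (fun s => u s j) t)
    (h1 : ∀ t : ℝ, 0 ≤ t →
      deriv (fun s => u s 0) t + I * (ξ : ℂ) * u t 1 = 0)
    (h2 : ∀ t : ℝ, 0 ≤ t →
      deriv (fun s => u s 1) t + I * (ξ : ℂ) * u t 0 + (γ : ℂ) * u t 1 + u t 2 = 0)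
    (h3 : ∀ t : ℝ, 0 ≤ t →
      deriv (fun s => u s 2) t + I * (ξ : ℂ) * (a₄ : ℂ) * u t 3 - u t 1 = 0)
    (h4 : ∀ t : ℝ, 0 ≤ t →
      deriv (fun s => u s 3) t + I * (ξ : ℂ) * (a₄ : ℂ) * u t 2 + (a₅ : ℂ) * u t 4 = 0)
    (h5 : ∀ t : ℝ, 0 ≤ t →
      deriv (fun s => u s 4) t + I * (ξ : ℂ) * (a₆ : ℂ) * u t 5 - (a₅ : ℂ) * u t 3 = 0)
    (h6 : ∀ t : ℝ, 0 ≤ t →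
      deriv (fun s => u s 5) t + I * (ξ : ℂ) * (a₆ : ℂ) * u t 4 = 0) :
    ∀ t : ℝ, 0 ≤ t →
      ξ * deriv (fun s => (I * u s 0 * (starRingEnd ℂ) (u s 1)).re) t
      + ξ^2 * (Complex.normSq (u t 0) - Complex.normSq (u t 1))
      + γ * ξ * (I * u t 0 * (starRingEnd ℂ) (u t 1)).re
      + ξ * (I * u t 0 * (starRingEnd ℂ) (u t 2)).re = 0 :=
  stmt15_general γ ξ u hdiff h1 h2
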